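/- arXiv:2411.16283 — 5 statements merged into one kernel-verified Lean document; each statement's English description precedes it below -/
import Mathlib

section
/- Let a, b be positive integers with ab ≥ 4, and define vectors g_m = (α_m, β_m) ∈ ℝ² for m ≥ 1 by g_1 = (-1, 0), g_2 = (0, -1), and g_{m+2} = -g_m + a·g_{m+1} if m is odd, g_{m+2} = -g_m + b·g_{m+1} if m is even. Then the slopes β_m/α_m (for m ≥ 3, where α_m > 0) converge to -(ab + √(ab(ab-4)))/(2b) as m → ∞. -/
/-!
Put `c = a b` and let `E` be the Lucas sequence `E₀ = 0, E₁ = 1, E_{k+2} = (c - 2) E_{k+1} - E_k`.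
By induction `g_{2k+1} = ((c - 1) E_k - E_{k+1}, -a E_k)` and `g_{2k+2} = (b E_k, -E_k - E_{k+1})`,
so along each parity class the slope is a Möbius function of `r_k = E_k / E_{k+1}`.
Since `r_{k+1} = 1 / (c - 2 - r_k)`, the ratios increase and stay below the smaller root `μ` of
`x² - (c - 2) x + 1`; their limit is a fixed point of the map, hence `μ`. Both Möbius functions
send `μ` to `-(c - 1 - μ) / b`, which is the claimed limit.
-/

open Filter Topology

theorem tendsto_of_tendsto_even_odd {X : Type*} [TopologicalSpace X] {f : ℕ → X} {l : X}
    (h_even : Tendsto (fun k => f (2 * k)) atTop (𝓝 l))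
    (h_odd : Tendsto (fun k => f (2 * k + 1)) atTop (𝓝 l)) :
    Tendsto f atTop (𝓝 l) := by
  intro s hs
  obtain ⟨N₀, hN₀⟩ := eventually_atTop.1 (h_even hs)
  obtain ⟨N₁, hN₁⟩ := eventually_atTop.1 (h_odd hs)
  refine eventually_atTop.2 ⟨2 * (N₀ + N₁), fun n hn => ?_⟩
  obtain ⟨k, rfl | rfl⟩ := n.even_or_odd'
  · exact hN₀ k (by omega)
  · exact hN₁ k (by omega)

noncomputable def lucasU (d : ℝ) : ℕ → ℝ
  | 0 => 0
  | 1 => 1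
  | k + 2 => d * lucasU d (k + 1) - lucasU d k

section LucasU

variable {d μ : ℝ}

theorem lucasU_succ_pos_and_le (hμ : 0 < μ) (hd : d * μ = μ ^ 2 + 1) (k : ℕ) :
    0 < lucasU d (k + 1) ∧ lucasU d k ≤ μ * lucasU d (k + 1) := by
  induction k with
  | zero => simp [lucasU, hμ.le]
  | succ k ih =>
    obtain ⟨hpos, hle⟩ := ih
    have hrec : lucasU d (k + 2) = d * lucasU d (k + 1) - lucasU d k := rfl
    have hstep : lucasU d (k + 1) ≤ μ * lucasU d (k + 2) := by
      rw [hrec]; nlinarith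
    exact ⟨by nlinarith, hstep⟩

theorem lucasU_div_succ_le (hμ : 0 < μ) (hd : d * μ = μ ^ 2 + 1) (k : ℕ) :
    lucasU d k / lucasU d (k + 1) ≤ μ :=
  have ⟨hpos, hle⟩ := lucasU_succ_pos_and_le hμ hd k
  (div_le_iff₀ hpos).2 (by linarith)

theorem lucasU_div_succ_succ {k : ℕ} (hk : lucasU d (k + 1) ≠ 0) :
    lucasU d (k + 1) / lucasU d (k + 2) = 1 / (d - lucasU d k / lucasU d (k + 1)) := by
  rw [show lucasU d (k + 2) = d * lucasU d (k + 1) - lucasU d k from rfl]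
  field_simp

theorem monotone_lucasU_div_succ (hμ : 0 < μ) (hd : d * μ = μ ^ 2 + 1) :
    Monotone fun k => lucasU d k / lucasU d (k + 1) := by
  refine monotone_nat_of_le_succ fun k => ?_
  induction k with
  | zero =>
    simpa [lucasU] using div_nonneg zero_le_one (lucasU_succ_pos_and_le hμ hd 1).1.le
  | succ k ih =>
    have hgap : 0 < d - μ := by nlinarith
    rw [lucasU_div_succ_succ (lucasU_succ_pos_and_le hμ hd k).1.ne',
      lucasU_div_succ_succ (lucasU_succ_pos_and_le hμ hd (k + 1)).1.ne']
    have hle := lucasU_div_succ_le hμ hd (k + 1)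
    gcongr
    all_goals linarith

theorem tendsto_lucasU_div_succ (hμ : 0 < μ) (hμ₁ : μ ≤ 1) (hd : d * μ = μ ^ 2 + 1) :
    Tendsto (fun k => lucasU d k / lucasU d (k + 1)) atTop (𝓝 μ) := by
  set r := fun k => lucasU d k / lucasU d (k + 1)
  have hle : ∀ k, r k ≤ μ := lucasU_div_succ_le hμ hd
  have hr : Tendsto r atTop (𝓝 (⨆ k, r k)) :=
    tendsto_atTop_ciSup (monotone_lucasU_div_succ hμ hd) ⟨μ, Set.forall_mem_range.2 hle⟩
  set L := ⨆ k, r k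
  have hLμ : L ≤ μ := ciSup_le hle
  have hgap : 0 < d - L := by nlinarith
  have hfix : L = 1 / (d - L) :=
    tendsto_nhds_unique (((tendsto_add_atTop_iff_nat 1).2 hr).congr fun k =>
      lucasU_div_succ_succ (lucasU_succ_pos_and_le hμ hd k).1.ne')
      (tendsto_const_nhds.div (tendsto_const_nhds.sub hr) hgap.ne')
  have hquad : L ^ 2 - d * L + 1 = 0 := by
    field_simp at hfix
    linarith
  have hL : L = μ := by
    have hroots : (L - μ) * (L - (d - μ)) = 0 := by linear_combination hquad + hd
    have hother : μ ≤ d - μ := by nlinarith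
    rcases mul_eq_zero.1 hroots with h | h <;> linarith
  exact hL ▸ hr

end LucasU

section AlternatingRecursion

variable {a b : ℝ} {g : ℕ → ℝ × ℝ}

theorem alternating_eq_lucasU (h1 : g 1 = (-1, 0)) (h2 : g 2 = (0, -1))
    (hodd : ∀ m, 1 ≤ m → Odd m → g (m + 2) = -g m + a • g (m + 1))
    (heven : ∀ m, 1 ≤ m → Even m → g (m + 2) = -g m + b • g (m + 1)) (k : ℕ) :
    g (2 * k + 1) = ((a * b - 1) * lucasU (a * b - 2) k - lucasU (a * b - 2) (k + 1),
        -a * lucasU (a * b - 2) k) ∧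
      g (2 * k + 2) = (b * lucasU (a * b - 2) k,
        -lucasU (a * b - 2) k - lucasU (a * b - 2) (k + 1)) := by
  induction k with
  | zero => simp [h1, h2, lucasU]
  | succ k ih =>
    have hrec : lucasU (a * b - 2) (k + 1 + 1) =
        (a * b - 2) * lucasU (a * b - 2) (k + 1) - lucasU (a * b - 2) k := rfl
    have hg₁ : g (2 * (k + 1) + 1) = ((a * b - 1) * lucasU (a * b - 2) (k + 1) -
        lucasU (a * b - 2) (k + 1 + 1), -a * lucasU (a * b - 2) (k + 1)) := by
      rw [show 2 * (k + 1) + 1 = 2 * k + 1 + 2 by ring, hodd _ (by omega) (odd_two_mul_add_one k),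
        ih.1, ih.2, hrec]
      ext <;> simp <;> ring
    refine ⟨hg₁, ?_⟩
    rw [show 2 * (k + 1) + 2 = 2 * k + 2 + 2 by ring,
      heven _ (by omega) ⟨k + 1, by ring⟩, show 2 * k + 2 + 1 = 2 * (k + 1) + 1 by ring, ih.2,
      hg₁, hrec]
    ext <;> simp <;> ring

theorem tendsto_alternating_slope (h1 : g 1 = (-1, 0)) (h2 : g 2 = (0, -1))
    (hodd : ∀ m, 1 ≤ m → Odd m → g (m + 2) = -g m + a • g (m + 1))
    (heven : ∀ m, 1 ≤ m → Even m → g (m + 2) = -g m + b • g (m + 1)) (hb : b ≠ 0) {μ : ℝ}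
    (hμ : 0 < μ) (hμ₁ : μ ≤ 1) (hd : (a * b - 2) * μ = μ ^ 2 + 1) :
    Tendsto (fun m => (g m).2 / (g m).1) atTop (𝓝 (-(a * b - 1 - μ) / b)) := by
  have hE : ∀ k, lucasU (a * b - 2) (k + 1) ≠ 0 := fun k =>
    (lucasU_succ_pos_and_le hμ hd k).1.ne'
  have hr := tendsto_lucasU_div_succ hμ hμ₁ hd
  have hclosed := alternating_eq_lucasU h1 h2 hodd heven
  generalize lucasU (a * b - 2) = E at hE hr hclosed
  refine tendsto_of_tendsto_even_odd ((tendsto_add_atTop_iff_nat 1).1 ?_) ?_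
  · have hslope : ∀ k, (g (2 * k + 2)).2 / (g (2 * k + 2)).1 =
        (-(E k / E (k + 1)) - 1) / (b * (E k / E (k + 1))) := by
      intro k
      rw [(hclosed k).2]
      field_simp [hE k]
    have hval : (-μ - 1) / (b * μ) = -(a * b - 1 - μ) / b := by
      field_simp
      linear_combination hd
    rw [← hval]
    exact ((hr.neg.sub_const 1).div (hr.const_mul b) (mul_ne_zero hb hμ.ne')).congr
      fun k => (hslope k).symm
  · have hslope : ∀ k, (g (2 * k + 1)).2 / (g (2 * k + 1)).1 =
        (-a * (E k / E (k + 1))) / ((a * b - 1) * (E k / E (k + 1)) - 1) := by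
      intro k
      rw [(hclosed k).1]
      field_simp [hE k]
    have hden : (a * b - 1) * μ - 1 = μ * (μ + 1) := by linear_combination hd
    have hval : -a * μ / ((a * b - 1) * μ - 1) = -(a * b - 1 - μ) / b := by
      rw [hden]
      field_simp
      linear_combination hd
    rw [← hval]
    exact ((hr.const_mul (-a)).div ((hr.const_mul _).sub_const 1) (by rw [hden]; positivity)).congr
      fun k => (hslope k).symm

end AlternatingRecursion

theorem stmt_5_general (a b : ℤ) (hb : 0 < b) (hab : 4 ≤ a * b)
    (g : ℕ → ℝ × ℝ)
    (h1 : g 1 = (-1, 0)) (h2 : g 2 = (0, -1))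
    (hodd : ∀ m, 1 ≤ m → Odd m → g (m + 2) = -g m + (a : ℝ) • g (m + 1))
    (heven : ∀ m, 1 ≤ m → Even m → g (m + 2) = -g m + (b : ℝ) • g (m + 1)) :
    Filter.Tendsto (fun m : ℕ => (g m).2 / (g m).1) Filter.atTop
      (nhds (-(((a : ℝ) * b + Real.sqrt ((a * b) * (a * b - 4))) / (2 * b)))) := by
  have hab' : (4 : ℝ) ≤ a * b := by exact_mod_cast hab
  set s := Real.sqrt ((a * b) * (a * b - 4) : ℝ)
  have hs : s ^ 2 = a * b * (a * b - 4) := Real.sq_sqrt (by nlinarith)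
  have hs₀ : 0 ≤ s := Real.sqrt_nonneg _
  have htarget : -(((a : ℝ) * b + s) / (2 * b)) = -(a * b - 1 - (a * b - 2 - s) / 2) / b := by ring
  rw [htarget]
  -- `μ = (ab - 2 - s) / 2` is the smaller root of `x ^ 2 - (ab - 2) x + 1`.
  refine tendsto_alternating_slope h1 h2 hodd heven (by positivity) ?_ ?_
    (by linear_combination -hs / 4)
  · nlinarith
  · nlinarith

theorem stmt_5 (a b : ℤ) (ha : 0 < a) (hb : 0 < b) (hab : 4 ≤ a * b)
    (g : ℕ → ℝ × ℝ)
    (h1 : g 1 = (-1, 0)) (h2 : g 2 = (0, -1))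
    (hodd : ∀ m, 1 ≤ m → Odd m → g (m + 2) = -g m + (a : ℝ) • g (m + 1))
    (heven : ∀ m, 1 ≤ m → Even m → g (m + 2) = -g m + (b : ℝ) • g (m + 1)) :
    Filter.Tendsto (fun m : ℕ => (g m).2 / (g m).1) Filter.atTop
      (nhds (-(((a : ℝ) * b + Real.sqrt ((a * b) * (a * b - 4))) / (2 * b)))) :=
  stmt_5_general a b hb hab g h1 h2 hodd heven
end

section
/- Let a, b be positive integers with ab ≥ 4, and let c₀ < 0, d₀ > 0 be integers. Then -d₀/c₀ > (ab + √(ab(ab-4)))/(2a) if and only if both ab·c₀·d₀ + a·d₀² + b·c₀² > 0 and 2d₀ + b·c₀ > 0 hold. -/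
/-! The threshold `(ab + √(ab(ab - 4)))/(2a)` is the larger root of `q(x) = a x² - ab x + b`.
A real `x` lies beyond the larger root of a quadratic with positive leading coefficient exactly
when `q(x) > 0` and `x` lies to the right of the vertex, here `b/2`. For `x = -d₀/c₀`, clearing
the positive denominators `c₀²` and `-c₀` turns these into the two integer conditions. -/

theorem Real.sqrt_lt_iff_pos_and_lt_sq {x y : ℝ} : √x < y ↔ 0 < y ∧ x < y ^ 2 :=
  ⟨fun h ↦ have hy := (Real.sqrt_nonneg x).trans_lt h; ⟨hy, (Real.sqrt_lt' hy).1 h⟩,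
    fun ⟨hy, h⟩ ↦ (Real.sqrt_lt' hy).2 h⟩

/-- For a negative discriminant `√` returns `0`, and both sides reduce to `-B / (2 * A) < x`. -/
theorem quadratic_root_lt_iff {A B C x : ℝ} (hA : 0 < A) :
    (-B + √(discrim A B C)) / (2 * A) < x ↔ 0 < A * x ^ 2 + B * x + C ∧ -B / (2 * A) < x := by
  have h2A : 0 < 2 * A := by positivity
  have hcompleteSquare :
      (x * (2 * A) - -B) ^ 2 - discrim A B C = 4 * A * (A * x ^ 2 + B * x + C) := by
    rw [discrim]; ring
  rw [div_lt_iff₀ h2A, div_lt_iff₀ h2A, ← lt_sub_iff_add_lt', Real.sqrt_lt_iff_pos_and_lt_sq,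
    ← sub_pos (b := discrim A B C), hcompleteSquare]
  constructor
  · rintro ⟨hy, hq⟩
    exact ⟨pos_of_mul_pos_right hq (by positivity), by linarith⟩
  · rintro ⟨hq, hv⟩
    exact ⟨by linarith, by positivity⟩

theorem stmt_10_general (a b c₀ d₀ : ℤ) (ha : 0 < a)
    (hc : c₀ < 0) :
    ((a : ℝ) * b + Real.sqrt ((a * b) * (a * b - 4))) / (2 * a) < -(d₀ : ℝ) / c₀ ↔
    (0 < a * b * c₀ * d₀ + a * d₀ ^ 2 + b * c₀ ^ 2 ∧ 0 < 2 * d₀ + b * c₀) := by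
  have hA : (0 : ℝ) < a := by exact_mod_cast ha
  have hC : (c₀ : ℝ) < 0 := by exact_mod_cast hc
  have hC0 : (c₀ : ℝ) ≠ 0 := hC.ne
  have hroot : ((a : ℝ) * b + √((a * b) * (a * b - 4))) / (2 * a)
      = (-(-(a * b)) + √(discrim (a : ℝ) (-(a * b)) b)) / (2 * a) := by
    rw [discrim]; ring_nf
  rw [hroot, quadratic_root_lt_iff hA]
  set x := -(d₀ : ℝ) / c₀
  have hquadratic : (c₀ : ℝ) ^ 2 * (a * x ^ 2 + -(a * b) * x + b)
      = ((a * b * c₀ * d₀ + a * d₀ ^ 2 + b * c₀ ^ 2 : ℤ) : ℝ) := by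
    simp only [x]; push_cast; field_simp; ring
  have hvertex : -(c₀ : ℝ) * (x - -(-(a * b)) / (2 * a))
      = ((2 * d₀ + b * c₀ : ℤ) : ℝ) / 2 := by
    simp only [x]; push_cast; field_simp; ring
  refine and_congr ?_ ?_
  · rw [← mul_pos_iff_of_pos_left (pow_pos (neg_pos.2 hC) 2), neg_sq, hquadratic, Int.cast_pos]
  · rw [← sub_pos, ← mul_pos_iff_of_pos_left (neg_pos.2 hC), hvertex,
      div_pos_iff_of_pos_right two_pos, Int.cast_pos]

theorem stmt_10 (a b c₀ d₀ : ℤ) (ha : 0 < a) (hb : 0 < b) (hab : 4 ≤ a * b)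
    (hc : c₀ < 0) (hd : 0 < d₀) :
    ((a : ℝ) * b + Real.sqrt ((a * b) * (a * b - 4))) / (2 * a) < -(d₀ : ℝ) / c₀ ↔
    (0 < a * b * c₀ * d₀ + a * d₀ ^ 2 + b * c₀ ^ 2 ∧ 0 < 2 * d₀ + b * c₀) :=
  stmt_10_general a b c₀ d₀ ha hc
end

section
/- Let p_1, p_1', p_2, p_2', p_3, p_3' be positive integers satisfying p_1·p_2·p_3 = p_1'·p_2'·p_3' and p_i·p_i' ≥ 4 for i = 1,2,3 (totally-infinite cyclic case), and let A = p_1·p_2·p_3. If 2·p_1·p_1' > A, then p_2·p_2' + p_3·p_3' ≤ A, i.e., the vertex v_1 satisfies the Type 4-1 condition. -/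
/-! With `x = p₂p₂'`, `y = p₃p₃'`, `z = p₁p₁'` and `A = p₁p₂p₃`, the product condition gives
`x * y * z = A ^ 2`, so `2z > A` forces `x * y < 2A`. Since `x, y ≥ 4`, `2(x + y) ≤ x * y`. -/

section

variable {R : Type*} [CommRing R] [LinearOrder R] [IsStrictOrderedRing R]

theorem two_mul_add_le_mul_of_four_le {x y : R} (hx : 4 ≤ x) (hy : 4 ≤ y) :
    2 * (x + y) ≤ x * y := by
  -- `x * y - 2 * (x + y) = (x - 4) * (y - 4) + 2 * (x - 4) + 2 * (y - 4)`
  nlinarith [mul_nonneg (sub_nonneg.2 hx) (sub_nonneg.2 hy)]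

theorem mul_lt_two_mul_of_mul_mul_eq_sq {u z a : R} (hu : 0 < u) (ha : 0 < a)
    (huz : u * z = a ^ 2) (h : a < 2 * z) : u < 2 * a := by
  have : a * u < a * (2 * a) := calc
    a * u < 2 * z * u := mul_lt_mul_of_pos_right h hu
    _ = a * (2 * a) := by rw [mul_comm u z] at huz; linear_combination 2 * huz
  exact lt_of_mul_lt_mul_left this ha.le

end

theorem stmt_13_general (p₁ p₁' p₂ p₂' p₃ p₃' : ℤ)
    (h1 : 0 < p₁) (h2 : 0 < p₂)
    (h3 : 0 < p₃)
    (hprod : p₁ * p₂ * p₃ = p₁' * p₂' * p₃')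
    (hi2 : 4 ≤ p₂ * p₂') (hi3 : 4 ≤ p₃ * p₃')
    (h : p₁ * p₂ * p₃ < 2 * (p₁ * p₁')) :
    p₂ * p₂' + p₃ * p₃' ≤ p₁ * p₂ * p₃ := by
  have hsq : p₂ * p₂' * (p₃ * p₃') * (p₁ * p₁') = (p₁ * p₂ * p₃) ^ 2 := by
    linear_combination (p₁ * p₂ * p₃) * hprod.symm
  have hxy : p₂ * p₂' * (p₃ * p₃') < 2 * (p₁ * p₂ * p₃) :=
    mul_lt_two_mul_of_mul_mul_eq_sq (mul_pos (by linarith) (by linarith)) (by positivity) hsq h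
  linarith [two_mul_add_le_mul_of_four_le hi2 hi3]

theorem stmt_13 (p₁ p₁' p₂ p₂' p₃ p₃' : ℤ)
    (h1 : 0 < p₁) (h1' : 0 < p₁') (h2 : 0 < p₂) (h2' : 0 < p₂')
    (h3 : 0 < p₃) (h3' : 0 < p₃')
    (hprod : p₁ * p₂ * p₃ = p₁' * p₂' * p₃')
    (hi1 : 4 ≤ p₁ * p₁') (hi2 : 4 ≤ p₂ * p₂') (hi3 : 4 ≤ p₃ * p₃')
    (h : p₁ * p₂ * p₃ < 2 * (p₁ * p₁')) :
    p₂ * p₂' + p₃ * p₃' ≤ p₁ * p₂ * p₃ :=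
  stmt_13_general p₁ p₁' p₂ p₂' p₃ p₃' h1 h2 h3 hprod hi2 hi3 h
end

section
/- Let p_1, p_1', p_2, p_2', p_3, p_3' be positive integers with p_1·p_2·p_3 = p_1'·p_2'·p_3' and p_i·p_i' ≥ 4 for all i, and set A = p_1·p_2·p_3. Then at least one of the following three inequalities holds: p_2·p_2' + p_3·p_3' ≤ A, p_3·p_3' + p_1·p_1' ≤ A, p_1·p_1' + p_2·p_2' ≤ A. (That is, at least one elementary vertex is of Type 4-1.) -/
/-!
Put `q i = pᵢ pᵢ'`. Then `q₁ q₂ q₃ = A²`, so it suffices that the largest `q i`, say `q₁`, has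
`q₂ + q₃ ≤ A`. Otherwise `A < q₂ + q₃ ≤ 2 q₁`, and since `q₂, q₃ ≥ 4` we have
`2 (q₂ + q₃) ≤ q₂ q₃`, whence `A² = q₁ q₂ q₃ ≥ 2 q₁ (q₂ + q₃) > A²`.
-/

section

variable {R : Type*} [CommRing R] [LinearOrder R] [IsStrictOrderedRing R]

theorem two_mul_add_le_mul_of_four_le_s14 {b c : R} (hb : 4 ≤ b) (hc : 4 ≤ c) :
    2 * (b + c) ≤ b * c := by
  nlinarith [mul_nonneg (sub_nonneg.2 hb) (sub_nonneg.2 hc)]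

theorem add_le_of_mul_mul_eq_mul_self {a b c A : R} (hA : 0 < A) (hb : 4 ≤ b) (hc : 4 ≤ c)
    (habc : a * b * c = A * A) (hba : b ≤ a) (hca : c ≤ a) : b + c ≤ A := by
  by_contra! hlt
  have h2a : A < 2 * a := by linarith
  have ha : 0 ≤ a := by linarith
  refine lt_irrefl (A * A) ?_
  calc A * A < 2 * a * (b + c) := mul_lt_mul'' h2a hlt hA.le hA.le
    _ = a * (2 * (b + c)) := by ring
    _ ≤ a * (b * c) := mul_le_mul_of_nonneg_left (two_mul_add_le_mul_of_four_le_s14 hb hc) ha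
    _ = A * A := by rw [← habc, mul_assoc]

end

theorem le_and_le_or_le_and_le_or_le_and_le {α : Type*} [LinearOrder α] (a b c : α) :
    (b ≤ a ∧ c ≤ a) ∨ (c ≤ b ∧ a ≤ b) ∨ (a ≤ c ∧ b ≤ c) := by
  rcases le_total b a with hba | hab
  · rcases le_total c a with hca | hac
    · exact Or.inl ⟨hba, hca⟩
    · exact Or.inr (Or.inr ⟨hac, hba.trans hac⟩)
  · rcases le_total c b with hcb | hbc
    · exact Or.inr (Or.inl ⟨hcb, hab⟩)
    · exact Or.inr (Or.inr ⟨hab.trans hbc, hbc⟩)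

theorem stmt_14_general (p₁ p₁' p₂ p₂' p₃ p₃' : ℤ)
    (h1 : 0 < p₁) (h2 : 0 < p₂) (h3 : 0 < p₃)
    (hprod : p₁ * p₂ * p₃ = p₁' * p₂' * p₃')
    (hi1 : 4 ≤ p₁ * p₁') (hi2 : 4 ≤ p₂ * p₂') (hi3 : 4 ≤ p₃ * p₃') :
    p₂ * p₂' + p₃ * p₃' ≤ p₁ * p₂ * p₃ ∨
    p₃ * p₃' + p₁ * p₁' ≤ p₁ * p₂ * p₃ ∨
    p₁ * p₁' + p₂ * p₂' ≤ p₁ * p₂ * p₃ := by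
  have hA : 0 < p₁ * p₂ * p₃ := by positivity
  have hsq : (p₁ * p₁') * (p₂ * p₂') * (p₃ * p₃') = (p₁ * p₂ * p₃) * (p₁ * p₂ * p₃) := by
    linear_combination (-(p₁ * p₂ * p₃)) * hprod
  rcases le_and_le_or_le_and_le_or_le_and_le (p₁ * p₁') (p₂ * p₂') (p₃ * p₃') with
    ⟨h21, h31⟩ | ⟨h32, h12⟩ | ⟨h13, h23⟩
  · exact Or.inl (add_le_of_mul_mul_eq_mul_self hA hi2 hi3 hsq h21 h31)
  · exact Or.inr <| Or.inl <|
      add_le_of_mul_mul_eq_mul_self hA hi3 hi1 (by linear_combination hsq) h32 h12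
  · exact Or.inr <| Or.inr <|
      add_le_of_mul_mul_eq_mul_self hA hi1 hi2 (by linear_combination hsq) h13 h23

theorem stmt_14 (p₁ p₁' p₂ p₂' p₃ p₃' : ℤ)
    (h1 : 0 < p₁) (h1' : 0 < p₁') (h2 : 0 < p₂) (h2' : 0 < p₂')
    (h3 : 0 < p₃) (h3' : 0 < p₃')
    (hprod : p₁ * p₂ * p₃ = p₁' * p₂' * p₃')
    (hi1 : 4 ≤ p₁ * p₁') (hi2 : 4 ≤ p₂ * p₂') (hi3 : 4 ≤ p₃ * p₃') :
    p₂ * p₂' + p₃ * p₃' ≤ p₁ * p₂ * p₃ ∨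
    p₃ * p₃' + p₁ * p₁' ≤ p₁ * p₂ * p₃ ∨
    p₁ * p₁' + p₂ * p₂' ≤ p₁ * p₂ * p₃ :=
  stmt_14_general p₁ p₁' p₂ p₂' p₃ p₃' h1 h2 h3 hprod hi1 hi2 hi3
end

section
/- Let p_1, p_1', p_2, p_2', p_3, p_3' be positive integers with p_1·p_2·p_3 = p_1'·p_2'·p_3' and p_i·p_i' ≥ 4 for all i, A = p_1·p_2·p_3. Suppose v_2 is the only vertex of Type 4-1, i.e., p_3·p_3' + p_1·p_1' ≤ A but p_2·p_2' + p_3·p_3' > A and p_1·p_1' + p_2·p_2' > A. Then 2·p_2·p_2' > A and 2·p_1·p_1' < A (so v_1 is of Type 4-2 and v_3 is of Type 4-3). -/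
/-!
Write `a = p₁p₁'`, `b = p₂p₂'`, `c = p₃p₃'`; then `abc = A²`. The two strict inequalities
together with the non-strict one give `a < b`, hence `A < a + b < 2b`. If instead `A ≤ 2a`, then
`A² ≤ 4a² < 4ab`, so `c = A² / (ab) < 4`, contradicting `4 ≤ c`.
-/

section

variable {R : Type*} [CommRing R] [LinearOrder R] [IsStrictOrderedRing R] {a b c A : R}

theorem lt_two_mul_of_add_le_of_lt_add (hca : c + a ≤ A) (hbc : A < b + c) (hab : A < a + b) :
    A < 2 * b := by
  linarith

theorem two_mul_lt_of_mul_mul_eq_mul_self (habc : a * b * c = A * A) (hc : 4 ≤ c)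
    (hca : c + a ≤ A) (hbc : A < b + c) : 2 * a < A := by
  by_contra! hA
  have hab : a < b := by linarith
  have ha : 0 < a := by linarith
  have hA0 : 0 ≤ A := by linarith
  have hsq : A * A < 4 * (a * b) := by nlinarith
  have : 4 * (A * A) < 4 * (A * A) :=
    calc 4 * (A * A) ≤ A * A * c := by nlinarith
      _ < 4 * (a * b) * c := by nlinarith
      _ = 4 * (A * A) := by rw [← habc]; ring
  exact lt_irrefl _ this

end

theorem stmt_15_general (p₁ p₁' p₂ p₂' p₃ p₃' : ℤ)
    (hprod : p₁ * p₂ * p₃ = p₁' * p₂' * p₃')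
    (hi3 : 4 ≤ p₃ * p₃')
    (hv2 : p₃ * p₃' + p₁ * p₁' ≤ p₁ * p₂ * p₃)
    (hv1 : p₁ * p₂ * p₃ < p₂ * p₂' + p₃ * p₃')
    (hv3 : p₁ * p₂ * p₃ < p₁ * p₁' + p₂ * p₂') :
    p₁ * p₂ * p₃ < 2 * (p₂ * p₂') ∧ 2 * (p₁ * p₁') < p₁ * p₂ * p₃ := by
  have habc : p₁ * p₁' * (p₂ * p₂') * (p₃ * p₃') = p₁ * p₂ * p₃ * (p₁ * p₂ * p₃) := by
    nth_rewrite 2 [hprod]; ring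
  exact ⟨lt_two_mul_of_add_le_of_lt_add hv2 hv1 hv3,
    two_mul_lt_of_mul_mul_eq_mul_self habc hi3 hv2 hv1⟩

theorem stmt_15 (p₁ p₁' p₂ p₂' p₃ p₃' : ℤ)
    (h1 : 0 < p₁) (h1' : 0 < p₁') (h2 : 0 < p₂) (h2' : 0 < p₂')
    (h3 : 0 < p₃) (h3' : 0 < p₃')
    (hprod : p₁ * p₂ * p₃ = p₁' * p₂' * p₃')
    (hi1 : 4 ≤ p₁ * p₁') (hi2 : 4 ≤ p₂ * p₂') (hi3 : 4 ≤ p₃ * p₃')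
    (hv2 : p₃ * p₃' + p₁ * p₁' ≤ p₁ * p₂ * p₃)
    (hv1 : p₁ * p₂ * p₃ < p₂ * p₂' + p₃ * p₃')
    (hv3 : p₁ * p₂ * p₃ < p₁ * p₁' + p₂ * p₂') :
    p₁ * p₂ * p₃ < 2 * (p₂ * p₂') ∧ 2 * (p₁ * p₁') < p₁ * p₂ * p₃ :=
  stmt_15_general p₁ p₁' p₂ p₂' p₃ p₃' hprod hi3 hv2 hv1 hv3
end
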